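/- Let g be convex and differentiable on ℝ^{K×N}, and f̃(Z, b) = g(Z + b·1ᵀ) + √(λ_W λ_H)·‖Z‖_* + (λ_b/2)‖b‖₂². Then (Z, b) is a global minimizer of f̃ if and only if ∇g(Z + b1ᵀ)·V = −√(λ_W λ_H)·U, ∇g(Z + b1ᵀ)ᵀ·U = −√(λ_W λ_H)·V, the operator norm ‖∇g(Z + b1ᵀ)‖ ≤ √(λ_W λ_H), and Σ_{i=1}^N [∇g(Z + b1ᵀ)]_i + λ_b·b = 0, where Z = UΣVᵀ is a compact SVD of Z. -/

import Mathlib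

open Matrix

attribute [local instance] Matrix.normedAddCommGroup Matrix.normedSpace

/-- The nuclear norm of a real matrix: the sum of its singular values. -/
noncomputable def nuclearNorm {K N : ℕ} (Z : Matrix (Fin K) (Fin N) ℝ) : ℝ :=
  ∑ i, Real.sqrt ((Matrix.isHermitian_conjTranspose_mul_self Z).eigenvalues i)

/-- The ℓ₂ operator norm of a matrix. -/
noncomputable def matOpNorm {K N : ℕ} (G : Matrix (Fin K) (Fin N) ℝ) : ℝ :=
  ‖LinearMap.toContinuousLinearMap (Matrix.toEuclideanLin G)‖

/-- The convex objective `f̃(Z,b) = g(Z + b·1ᵀ) + √(λ_W λ_H)‖Z‖_* + (λ_b/2)‖b‖₂²`. -/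
noncomputable def ftilde {K N : ℕ} (g : Matrix (Fin K) (Fin N) ℝ → ℝ) (lW lH lb : ℝ)
    (Z : Matrix (Fin K) (Fin N) ℝ) (b : Fin K → ℝ) : ℝ :=
  g (Z + Matrix.of fun i _ => b i) + Real.sqrt (lW * lH) * nuclearNorm Z +
    lb / 2 * ∑ i, (b i) ^ 2

/-!
The nuclear norm is dual to the operator norm: `⟪B, A⟫ ≤ ‖B‖ ‖A‖_*`, with equality for the polar
factor of `A`, built from the eigenbasis of `AᵀA`. Hence `‖·‖_*` is convex, and `f̃` is a
differentiable function of `(Z, b)` plus the convex term `c ‖Z‖_*`, `c = √(λ_W λ_H)`. Global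
minimality of `(Z, b)` is therefore equivalent to the first-order condition along every direction,
which splits into `∑_j G_kj + λ_b b_k = 0` and "`Z` minimises `c ‖·‖_* + ⟪G, ·⟫`". For
`Z = U diag σ Vᵀ` the latter forces `⟪G, Z⟫ = -c ‖Z‖_* = -c ∑ σ_i` and `‖G‖ ≤ c`; as each
`⟪u_i, G v_i⟫ ≥ -c` and `σ_i > 0`, all of them equal `-c`, and the equality case of
Cauchy–Schwarz turns this into `G v_i = -c u_i` and `Gᵀ u_i = -c v_i`.
-/

open scoped RealInnerProductSpace
open WithLp (toLp ofLp)

lemma norm_sum_smul_sq_le_of_pairwise_inner_eq_zero {ι F : Type*} [Fintype ι]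
    [NormedAddCommGroup F] [InnerProductSpace ℝ F] {w : ι → F}
    (horth : Pairwise fun i j => ⟪w i, w j⟫ = 0) (hw : ∀ i, ‖w i‖ ≤ 1) (a : ι → ℝ) :
    ‖∑ i, a i • w i‖ ^ 2 ≤ ∑ i, a i ^ 2 := by
  rw [← real_inner_self_eq_norm_sq]
  simp only [sum_inner, inner_sum, real_inner_smul_left, real_inner_smul_right]
  refine Finset.sum_le_sum fun i _ => ?_
  rw [Finset.sum_eq_single i (fun j _ hji => by rw [horth hji, mul_zero, mul_zero]) (by simp),
    real_inner_self_eq_norm_sq, ← mul_assoc, ← sq]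
  have : ‖w i‖ ^ 2 ≤ 1 := pow_le_one₀ (norm_nonneg _) (hw i)
  nlinarith [sq_nonneg (a i)]

lemma eq_neg_smul_of_norm_le_of_inner_eq_neg {F : Type*} [NormedAddCommGroup F]
    [InnerProductSpace ℝ F] {x u : F} {c : ℝ} (hx : ‖x‖ ≤ c) (hu : ‖u‖ = 1) (h : ⟪u, x⟫ = -c) :
    x = -c • u := by
  have hc : 0 ≤ c := (norm_nonneg x).trans hx
  have hnorm : ‖-c • u‖ = c := by rw [norm_smul, hu, mul_one, norm_neg, Real.norm_of_nonneg hc]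
  refine eq_of_norm_le_re_inner_eq_norm_sq (𝕜 := ℝ) (hx.trans_eq hnorm.symm) ?_
  rw [hnorm, RCLike.re_to_real, real_inner_smul_right, real_inner_comm, h]
  ring

section FirstOrder
open Filter Set
variable {E : Type*} [AddCommGroup E] [Module ℝ E] {f h : E → ℝ} {x y : E} {d : ℝ}

lemma ConvexOn.add_le_of_hasLineDerivAt (hf : ConvexOn ℝ univ f)
    (hd : HasLineDerivAt ℝ f d x (y - x)) : f x + d ≤ f y := by
  have hslope : ∀ᶠ t in nhdsWithin (0 : ℝ) (Ioi 0),
      t⁻¹ • (f (x + t • (y - x)) - f x) ≤ f y - f x := by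
    filter_upwards [Ioc_mem_nhdsGT zero_lt_one] with t ⟨ht0, ht1⟩
    have hconv := hf.2 (mem_univ x) (mem_univ y) (sub_nonneg.2 ht1) ht0.le (sub_add_cancel 1 t)
    rw [show (1 - t) • x + t • y = x + t • (y - x) by module, smul_eq_mul, smul_eq_mul] at hconv
    rw [smul_eq_mul, inv_mul_le_iff₀ ht0]
    linarith
  linarith [le_of_tendsto hd.tendsto_slope_zero_right hslope]

lemma ConvexOn.le_add_of_forall_add_le_add (hh : ConvexOn ℝ univ h)
    (hmin : ∀ z, f x + h x ≤ f z + h z) (hd : HasLineDerivAt ℝ f d x (y - x)) :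
    h x ≤ h y + d := by
  have hslope : ∀ᶠ t in nhdsWithin (0 : ℝ) (Ioi 0),
      h x - h y ≤ t⁻¹ • (f (x + t • (y - x)) - f x) := by
    filter_upwards [Ioc_mem_nhdsGT zero_lt_one] with t ⟨ht0, ht1⟩
    have hconv := hh.2 (mem_univ x) (mem_univ y) (sub_nonneg.2 ht1) ht0.le (sub_add_cancel 1 t)
    rw [show (1 - t) • x + t • y = x + t • (y - x) by module, smul_eq_mul, smul_eq_mul] at hconv
    rw [smul_eq_mul, le_inv_mul_iff₀ ht0]
    linarith [hmin (x + t • (y - x))]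
  linarith [ge_of_tendsto hd.tendsto_slope_zero_right hslope]

end FirstOrder

namespace Matrix

variable {m n p r : ℕ}

noncomputable def toCLM (M : Matrix (Fin m) (Fin n) ℝ) :
    EuclideanSpace ℝ (Fin n) →L[ℝ] EuclideanSpace ℝ (Fin m) :=
  LinearMap.toContinuousLinearMap (toEuclideanLin M)

lemma toCLM_apply (M : Matrix (Fin m) (Fin n) ℝ) (x : EuclideanSpace ℝ (Fin n)) :
    toCLM M x = toLp 2 (M *ᵥ ofLp x) := rfl

lemma toCLM_single_apply (M : Matrix (Fin m) (Fin n) ℝ) (j : Fin n) (i : Fin m) :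
    toCLM M (EuclideanSpace.single j 1) i = M i j := by
  simp [toCLM_apply]

lemma ext_toCLM_single {M M' : Matrix (Fin m) (Fin n) ℝ}
    (h : ∀ j, toCLM M (EuclideanSpace.single j 1) = toCLM M' (EuclideanSpace.single j 1)) :
    M = M' := by
  ext i j
  rw [← toCLM_single_apply M j i, h, toCLM_single_apply]

lemma toCLM_mul (A : Matrix (Fin m) (Fin n) ℝ) (B : Matrix (Fin n) (Fin p) ℝ) :
    toCLM (A * B) = (toCLM A).comp (toCLM B) := by
  ext x : 1
  simp [toCLM_apply]

lemma toCLM_one_apply (x : EuclideanSpace ℝ (Fin n)) :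
    toCLM (1 : Matrix (Fin n) (Fin n) ℝ) x = x := by
  simp [toCLM_apply]

lemma toCLM_smul (c : ℝ) (A : Matrix (Fin m) (Fin n) ℝ) : toCLM (c • A) = c • toCLM A := by
  ext x : 1
  simp [toCLM]

lemma inner_toCLM_transpose_left (A : Matrix (Fin m) (Fin n) ℝ) (x : EuclideanSpace ℝ (Fin m))
    (y : EuclideanSpace ℝ (Fin n)) : ⟪toCLM Aᵀ x, y⟫ = ⟪x, toCLM A y⟫ := by
  have h := Matrix.toEuclideanLin_conjTranspose_eq_adjoint A
  rw [conjTranspose_eq_transpose_of_trivial] at h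
  simp only [toCLM, LinearMap.coe_toContinuousLinearMap', h, LinearMap.adjoint_inner_left]

lemma inner_toCLM_transpose_right (A : Matrix (Fin m) (Fin n) ℝ) (x : EuclideanSpace ℝ (Fin n))
    (y : EuclideanSpace ℝ (Fin m)) : ⟪x, toCLM Aᵀ y⟫ = ⟪toCLM A x, y⟫ := by
  rw [← inner_toCLM_transpose_left, transpose_transpose]

lemma norm_toCLM_apply_le (M : Matrix (Fin m) (Fin n) ℝ) (x : EuclideanSpace ℝ (Fin n)) :
    ‖toCLM M x‖ ≤ matOpNorm M * ‖x‖ :=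
  (toCLM M).le_opNorm x

lemma matOpNorm_neg (M : Matrix (Fin m) (Fin n) ℝ) : matOpNorm (-M) = matOpNorm M := by
  simp [matOpNorm]

-- `matOpNorm` is definitionally the norm of Mathlib's (scoped) L2 operator norm on matrices.
lemma matOpNorm_transpose (M : Matrix (Fin m) (Fin n) ℝ) : matOpNorm Mᵀ = matOpNorm M := by
  let _ := Matrix.instL2OpNormedAddCommGroup (m := Fin m) (n := Fin n) (𝕜 := ℝ)
  let _ := Matrix.instL2OpNormedAddCommGroup (m := Fin n) (n := Fin m) (𝕜 := ℝ)
  have := Matrix.l2_opNorm_conjTranspose M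
  rwa [conjTranspose_eq_transpose_of_trivial] at this

lemma norm_toCLM_apply_of_transpose_mul_self {M : Matrix (Fin m) (Fin n) ℝ} (hM : Mᵀ * M = 1)
    (x : EuclideanSpace ℝ (Fin n)) : ‖toCLM M x‖ = ‖x‖ := by
  have h : ⟪toCLM M x, toCLM M x⟫ = ⟪x, x⟫ := by
    rw [← inner_toCLM_transpose_left, ← ContinuousLinearMap.comp_apply, ← toCLM_mul, hM,
      toCLM_one_apply]
  simpa [real_inner_self_eq_norm_sq] using h

def frobeniusInner (B A : Matrix (Fin m) (Fin n) ℝ) : ℝ := (Bᵀ * A).trace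

section frobeniusInner
variable (B A C : Matrix (Fin m) (Fin n) ℝ)

lemma frobeniusInner_add_right :
    frobeniusInner B (A + C) = frobeniusInner B A + frobeniusInner B C := by
  simp [frobeniusInner, Matrix.mul_add, trace_add]

lemma frobeniusInner_sub_right :
    frobeniusInner B (A - C) = frobeniusInner B A - frobeniusInner B C := by
  simp [frobeniusInner, Matrix.mul_sub, trace_sub]

lemma frobeniusInner_smul_right (t : ℝ) : frobeniusInner B (t • A) = t * frobeniusInner B A := by
  simp [frobeniusInner]

lemma frobeniusInner_zero_right : frobeniusInner B (0 : Matrix (Fin m) (Fin n) ℝ) = 0 := by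
  simp [frobeniusInner]

lemma frobeniusInner_neg_left : frobeniusInner (-B) A = -frobeniusInner B A := by
  simp [frobeniusInner]

lemma frobeniusInner_eq_sum_inner (w : OrthonormalBasis (Fin n) ℝ (EuclideanSpace ℝ (Fin n))) :
    frobeniusInner B A = ∑ i, ⟪toCLM B (w i), toCLM A (w i)⟫ := by
  rw [frobeniusInner, ← Matrix.trace_toLin_eq _ (PiLp.basisFun 2 ℝ (Fin n)),
    LinearMap.trace_eq_sum_inner _ w]
  refine Finset.sum_congr rfl fun i _ => ?_
  change ⟪w i, toCLM (Bᵀ * A) (w i)⟫ = _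
  rw [toCLM_mul, ContinuousLinearMap.comp_apply, inner_toCLM_transpose_right]

lemma frobeniusInner_vecMulVec (x : EuclideanSpace ℝ (Fin m)) (y : EuclideanSpace ℝ (Fin n)) :
    frobeniusInner B (vecMulVec (ofLp x) (ofLp y)) = ⟪x, toCLM B y⟫ := by
  simp only [frobeniusInner, trace, diag, mul_apply, transpose_apply, vecMulVec_apply,
    PiLp.inner_apply, toCLM_apply, mulVec, dotProduct, RCLike.inner_apply, conj_trivial,
    Finset.sum_mul]
  rw [Finset.sum_comm]
  refine Finset.sum_congr rfl fun i _ => Finset.sum_congr rfl fun j _ => ?_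
  ring

lemma frobeniusInner_replicateCol (e : Fin m → ℝ) :
    frobeniusInner B (replicateCol (Fin n) e) = ∑ i, (∑ j, B i j) * e i := by
  simp only [frobeniusInner, trace, diag, mul_apply, transpose_apply, replicateCol_apply,
    Finset.sum_mul]
  exact Finset.sum_comm

lemma inner_single_toCLM_single (M : Matrix (Fin m) (Fin n) ℝ) (i : Fin m) (j : Fin n) :
    ⟪EuclideanSpace.single i 1, toCLM M (EuclideanSpace.single j 1)⟫ = M i j := by
  simp [EuclideanSpace.inner_single_left, toCLM_single_apply]

lemma frobeniusInner_mul_diagonal_mul_transpose (U : Matrix (Fin m) (Fin r) ℝ)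
    (V : Matrix (Fin n) (Fin r) ℝ) (σ : Fin r → ℝ) :
    frobeniusInner B (U * diagonal σ * Vᵀ) = ∑ i, σ i *
      ⟪toCLM U (EuclideanSpace.single i 1), toCLM B (toCLM V (EuclideanSpace.single i 1))⟫ := by
  rw [frobeniusInner, ← Matrix.mul_assoc, trace_mul_comm, ← Matrix.mul_assoc, ← Matrix.mul_assoc]
  refine Finset.sum_congr rfl fun i _ => ?_
  rw [diag_apply, mul_diagonal, mul_comm, ← transpose_mul,
    ← inner_single_toCLM_single ((B * V)ᵀ * U), toCLM_mul,
    ContinuousLinearMap.comp_apply, inner_toCLM_transpose_right,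
    toCLM_mul, real_inner_comm]
  rfl

end frobeniusInner

section SingularValues
variable (A : Matrix (Fin m) (Fin n) ℝ)

noncomputable def rightSingularVectors : OrthonormalBasis (Fin n) ℝ (EuclideanSpace ℝ (Fin n)) :=
  (isHermitian_conjTranspose_mul_self A).eigenvectorBasis

noncomputable def singularValues (i : Fin n) : ℝ :=
  √((isHermitian_conjTranspose_mul_self A).eigenvalues i)

lemma nuclearNorm_eq_sum_singularValues : nuclearNorm A = ∑ i, A.singularValues i := rfl

lemma singularValues_nonneg (i : Fin n) : 0 ≤ A.singularValues i := Real.sqrt_nonneg _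

lemma nuclearNorm_nonneg : 0 ≤ nuclearNorm A :=
  Finset.sum_nonneg fun i _ => A.singularValues_nonneg i

lemma inner_toCLM_rightSingularVectors (i j : Fin n) :
    ⟪toCLM A (A.rightSingularVectors i), toCLM A (A.rightSingularVectors j)⟫ =
      if i = j then A.singularValues i ^ 2 else 0 := by
  have hA := isHermitian_conjTranspose_mul_self A
  have hgram : toCLM (Aᵀ * A) (A.rightSingularVectors j) =
      hA.eigenvalues j • A.rightSingularVectors j := by
    rw [toCLM_apply, ← conjTranspose_eq_transpose_of_trivial]
    exact congrArg (toLp 2) (hA.mulVec_eigenvectorBasis j)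
  rw [← inner_toCLM_transpose_right, ← ContinuousLinearMap.comp_apply, ← toCLM_mul, hgram,
    real_inner_smul_right, orthonormal_iff_ite.mp (A.rightSingularVectors).orthonormal]
  split_ifs with h
  · subst h
    rw [singularValues, Real.sq_sqrt ((posSemidef_conjTranspose_mul_self A).eigenvalues_nonneg i),
      mul_one]
  · rw [mul_zero]

lemma norm_toCLM_rightSingularVectors (i : Fin n) :
    ‖toCLM A (A.rightSingularVectors i)‖ = A.singularValues i := by
  have h := A.inner_toCLM_rightSingularVectors i i
  rw [if_pos rfl, real_inner_self_eq_norm_sq] at h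
  exact (pow_left_inj₀ (norm_nonneg _) (A.singularValues_nonneg i) two_ne_zero).mp h

end SingularValues

lemma frobeniusInner_le_matOpNorm_mul_nuclearNorm (B A : Matrix (Fin m) (Fin n) ℝ) :
    frobeniusInner B A ≤ matOpNorm B * nuclearNorm A := by
  rw [frobeniusInner_eq_sum_inner B A A.rightSingularVectors, nuclearNorm_eq_sum_singularValues,
    Finset.mul_sum]
  refine Finset.sum_le_sum fun i _ => ?_
  calc ⟪toCLM B (A.rightSingularVectors i), toCLM A (A.rightSingularVectors i)⟫
      ≤ ‖toCLM B (A.rightSingularVectors i)‖ * A.singularValues i := by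
        rw [← norm_toCLM_rightSingularVectors]; exact real_inner_le_norm _ _
    _ ≤ matOpNorm B * A.singularValues i := by
        gcongr
        · exact A.singularValues_nonneg i
        · simpa using norm_toCLM_apply_le B (A.rightSingularVectors i)

lemma exists_matOpNorm_le_one_frobeniusInner_eq_nuclearNorm (A : Matrix (Fin m) (Fin n) ℝ) :
    ∃ B : Matrix (Fin m) (Fin n) ℝ, matOpNorm B ≤ 1 ∧ frobeniusInner B A = nuclearNorm A := by
  have hgram := A.inner_toCLM_rightSingularVectors
  have hnorm := A.norm_toCLM_rightSingularVectors
  have hs := A.singularValues_nonneg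
  rw [nuclearNorm_eq_sum_singularValues]
  set v := A.rightSingularVectors
  set s := A.singularValues
  -- `B = ∑ s_i⁻¹ (A v_i) v_iᵀ`; since `0⁻¹ = 0` the terms with `s_i = 0` vanish.
  set w : Fin n → EuclideanSpace ℝ (Fin m) := fun i => (s i)⁻¹ • toCLM A (v i) with hw
  have horth : Pairwise fun i j => ⟪w i, w j⟫ = 0 := fun i j hij => by
    simp only [hw, real_inner_smul_left, real_inner_smul_right, hgram, if_neg hij, mul_zero]
  have hw_le : ∀ i, ‖w i‖ ≤ 1 := fun i => by
    rw [hw, norm_smul, hnorm, norm_inv, Real.norm_of_nonneg (hs i)]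
    exact inv_mul_le_one
  have hwA : ∀ i, ⟪w i, toCLM A (v i)⟫ = s i := fun i => by
    rw [hw, real_inner_smul_left, hgram, if_pos rfl]
    rcases eq_or_ne (s i) 0 with h | h
    · simp [h]
    · field_simp
  set B := toEuclideanLin.symm (∑ i, (innerₛₗ ℝ (v i)).smulRight (w i))
  have hB : ∀ x, toCLM B x = ∑ i, ⟪v i, x⟫ • w i := fun x => by
    simp [B, toCLM]
  refine ⟨B, ContinuousLinearMap.opNorm_le_bound _ zero_le_one fun x => ?_, ?_⟩
  · have hx := norm_sum_smul_sq_le_of_pairwise_inner_eq_zero horth hw_le (fun i => ⟪v i, x⟫)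
    rw [v.sum_sq_inner_right] at hx
    change ‖toCLM B x‖ ≤ 1 * ‖x‖
    rw [one_mul, hB]
    exact (pow_le_pow_iff_left₀ (norm_nonneg _) (norm_nonneg _) two_ne_zero).mp hx
  · rw [frobeniusInner_eq_sum_inner B A v]
    refine Finset.sum_congr rfl fun j _ => ?_
    simp [hB, orthonormal_iff_ite.mp v.orthonormal, hwA]

lemma abs_inner_toCLM_le (B : Matrix (Fin m) (Fin n) ℝ) (x : EuclideanSpace ℝ (Fin m))
    (y : EuclideanSpace ℝ (Fin n)) : |⟪x, toCLM B y⟫| ≤ matOpNorm B * (‖x‖ * ‖y‖) :=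
  calc |⟪x, toCLM B y⟫| ≤ ‖x‖ * ‖toCLM B y‖ := abs_real_inner_le_norm _ _
    _ ≤ ‖x‖ * (matOpNorm B * ‖y‖) := by gcongr; exact norm_toCLM_apply_le B y
    _ = matOpNorm B * (‖x‖ * ‖y‖) := by ring

lemma matOpNorm_le_one_of_transpose_mul_self {M : Matrix (Fin m) (Fin n) ℝ} (hM : Mᵀ * M = 1) :
    matOpNorm M ≤ 1 :=
  ContinuousLinearMap.opNorm_le_bound _ zero_le_one fun x => by
    rw [one_mul]; exact (norm_toCLM_apply_of_transpose_mul_self hM x).le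

lemma norm_toCLM_single_of_transpose_mul_self {M : Matrix (Fin m) (Fin n) ℝ} (hM : Mᵀ * M = 1)
    (i : Fin n) : ‖toCLM M (EuclideanSpace.single i 1)‖ = 1 := by
  rw [norm_toCLM_apply_of_transpose_mul_self hM, PiLp.norm_single, norm_one]

lemma abs_inner_toCLM_single_le {U : Matrix (Fin m) (Fin r) ℝ} {V : Matrix (Fin n) (Fin r) ℝ}
    (hU : Uᵀ * U = 1) (hV : Vᵀ * V = 1) (G : Matrix (Fin m) (Fin n) ℝ) (i : Fin r) :
    |⟪toCLM U (EuclideanSpace.single i 1), toCLM G (toCLM V (EuclideanSpace.single i 1))⟫| ≤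
      matOpNorm G := by
  simpa [norm_toCLM_single_of_transpose_mul_self hU, norm_toCLM_single_of_transpose_mul_self hV]
    using abs_inner_toCLM_le G (toCLM U (EuclideanSpace.single i 1))
      (toCLM V (EuclideanSpace.single i 1))

lemma frobeniusInner_le_nuclearNorm {B A : Matrix (Fin m) (Fin n) ℝ} (hB : matOpNorm B ≤ 1) :
    frobeniusInner B A ≤ nuclearNorm A :=
  (frobeniusInner_le_matOpNorm_mul_nuclearNorm B A).trans <|
    mul_le_of_le_one_left (nuclearNorm_nonneg A) hB

lemma nuclearNorm_le_of_forall_frobeniusInner_le {A : Matrix (Fin m) (Fin n) ℝ} {c : ℝ}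
    (h : ∀ B, matOpNorm B ≤ 1 → frobeniusInner B A ≤ c) : nuclearNorm A ≤ c := by
  obtain ⟨B, hB, hBA⟩ := exists_matOpNorm_le_one_frobeniusInner_eq_nuclearNorm A
  exact hBA ▸ h B hB

lemma nuclearNorm_zero : nuclearNorm (0 : Matrix (Fin m) (Fin n) ℝ) = 0 :=
  le_antisymm
    (nuclearNorm_le_of_forall_frobeniusInner_le fun B _ => (frobeniusInner_zero_right B).le)
    (nuclearNorm_nonneg 0)

lemma nuclearNorm_add_le (A C : Matrix (Fin m) (Fin n) ℝ) :
    nuclearNorm (A + C) ≤ nuclearNorm A + nuclearNorm C :=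
  nuclearNorm_le_of_forall_frobeniusInner_le fun B hB => by
    rw [frobeniusInner_add_right]
    exact add_le_add (frobeniusInner_le_nuclearNorm hB) (frobeniusInner_le_nuclearNorm hB)

lemma nuclearNorm_smul_le {t : ℝ} (ht : 0 ≤ t) (A : Matrix (Fin m) (Fin n) ℝ) :
    nuclearNorm (t • A) ≤ t * nuclearNorm A :=
  nuclearNorm_le_of_forall_frobeniusInner_le fun B hB => by
    rw [frobeniusInner_smul_right]
    exact mul_le_mul_of_nonneg_left (frobeniusInner_le_nuclearNorm hB) ht

lemma convexOn_nuclearNorm : ConvexOn ℝ Set.univ (nuclearNorm : Matrix (Fin m) (Fin n) ℝ → ℝ) :=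
  ⟨convex_univ, fun _ _ _ _ _ _ ha hb _ =>
    (nuclearNorm_add_le _ _).trans
      (add_le_add (nuclearNorm_smul_le ha _) (nuclearNorm_smul_le hb _))⟩

lemma nuclearNorm_vecMulVec_le (x : EuclideanSpace ℝ (Fin m)) (y : EuclideanSpace ℝ (Fin n)) :
    nuclearNorm (vecMulVec (ofLp x) (ofLp y)) ≤ ‖x‖ * ‖y‖ :=
  nuclearNorm_le_of_forall_frobeniusInner_le fun B hB => by
    rw [frobeniusInner_vecMulVec]
    exact (le_abs_self _).trans ((abs_inner_toCLM_le B x y).trans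
      (mul_le_of_le_one_left (by positivity) hB))

lemma nuclearNorm_mul_diagonal_mul_transpose {U : Matrix (Fin m) (Fin r) ℝ}
    {V : Matrix (Fin n) (Fin r) ℝ} {σ : Fin r → ℝ} (hU : Uᵀ * U = 1) (hV : Vᵀ * V = 1)
    (hσ : ∀ i, 0 ≤ σ i) : nuclearNorm (U * diagonal σ * Vᵀ) = ∑ i, σ i := by
  refine le_antisymm (nuclearNorm_le_of_forall_frobeniusInner_le fun B hB => ?_) ?_
  · rw [frobeniusInner_mul_diagonal_mul_transpose]
    refine Finset.sum_le_sum fun i _ => mul_le_of_le_one_right (hσ i) ?_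
    exact (le_abs_self _).trans ((abs_inner_toCLM_single_le hU hV B i).trans hB)
  · have hUV : matOpNorm (U * Vᵀ) ≤ 1 := ContinuousLinearMap.opNorm_le_bound _ zero_le_one
      fun x => by
        change ‖toCLM (U * Vᵀ) x‖ ≤ 1 * ‖x‖
        rw [toCLM_mul, ContinuousLinearMap.comp_apply, norm_toCLM_apply_of_transpose_mul_self hU]
        refine (norm_toCLM_apply_le _ x).trans (mul_le_mul_of_nonneg_right ?_ (norm_nonneg x))
        rw [matOpNorm_transpose]
        exact matOpNorm_le_one_of_transpose_mul_self hV
    refine le_of_eq_of_le ?_ (frobeniusInner_le_nuclearNorm hUV)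
    rw [frobeniusInner_mul_diagonal_mul_transpose]
    refine Finset.sum_congr rfl fun i _ => ?_
    rw [toCLM_mul, ContinuousLinearMap.comp_apply, ← ContinuousLinearMap.comp_apply (toCLM Vᵀ),
      ← toCLM_mul, hV, toCLM_one_apply, real_inner_self_eq_norm_sq,
      norm_toCLM_single_of_transpose_mul_self hU, one_pow, mul_one]

lemma mul_eq_neg_smul_of_inner_eq_neg {G : Matrix (Fin m) (Fin n) ℝ} {U : Matrix (Fin m) (Fin r) ℝ}
    {V : Matrix (Fin n) (Fin r) ℝ} {c : ℝ} (hU : Uᵀ * U = 1) (hV : Vᵀ * V = 1)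
    (hG : matOpNorm G ≤ c)
    (h : ∀ i, ⟪toCLM U (EuclideanSpace.single i 1),
      toCLM G (toCLM V (EuclideanSpace.single i 1))⟫ = -c) :
    G * V = -c • U :=
  ext_toCLM_single fun i => by
    rw [toCLM_mul, ContinuousLinearMap.comp_apply, toCLM_smul, _root_.smul_apply]
    refine eq_neg_smul_of_norm_le_of_inner_eq_neg ?_ (norm_toCLM_single_of_transpose_mul_self hU i)
      (h i)
    calc _ ≤ matOpNorm G * ‖toCLM V (EuclideanSpace.single i 1)‖ := norm_toCLM_apply_le _ _
      _ ≤ c := by rw [norm_toCLM_single_of_transpose_mul_self hV, mul_one]; exact hG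

lemma matOpNorm_le_of_forall_neg_frobeniusInner_le {G : Matrix (Fin m) (Fin n) ℝ} {c : ℝ}
    (hc : 0 ≤ c) (h : ∀ A, -frobeniusInner G A ≤ c * nuclearNorm A) : matOpNorm G ≤ c := by
  refine ContinuousLinearMap.opNorm_le_bound _ hc fun y => ?_
  change ‖toCLM G y‖ ≤ c * ‖y‖
  set x := toCLM G y
  have hx : ‖x‖ * ‖x‖ ≤ c * ‖y‖ * ‖x‖ := by
    have h₁ := h (vecMulVec (ofLp (-x)) (ofLp y))
    rw [frobeniusInner_vecMulVec, inner_neg_left, neg_neg, real_inner_self_eq_norm_mul_norm] at h₁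
    have h₂ := nuclearNorm_vecMulVec_le (-x) y
    rw [norm_neg] at h₂
    nlinarith
  rcases (norm_nonneg x).eq_or_lt with h0 | hpos
  · rw [← h0]; positivity
  · exact le_of_mul_le_mul_right hx hpos

lemma inner_toCLM_single_eq_neg_of_frobeniusInner_eq {G : Matrix (Fin m) (Fin n) ℝ}
    {U : Matrix (Fin m) (Fin r) ℝ} {V : Matrix (Fin n) (Fin r) ℝ} {σ : Fin r → ℝ} {c : ℝ}
    (hU : Uᵀ * U = 1) (hV : Vᵀ * V = 1) (hσ : ∀ i, 0 < σ i) (hG : matOpNorm G ≤ c)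
    (h : frobeniusInner G (U * diagonal σ * Vᵀ) = -(c * ∑ i, σ i)) (i : Fin r) :
    ⟪toCLM U (EuclideanSpace.single i 1), toCLM G (toCLM V (EuclideanSpace.single i 1))⟫ = -c := by
  rw [frobeniusInner_mul_diagonal_mul_transpose] at h
  have hle : ∀ i ∈ Finset.univ, 0 ≤ σ i * (⟪toCLM U (EuclideanSpace.single i 1),
      toCLM G (toCLM V (EuclideanSpace.single i 1))⟫ + c) := fun i _ =>
    mul_nonneg (hσ i).le (by linarith [(abs_le.mp (abs_inner_toCLM_single_le hU hV G i)).1])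
  have hsum : ∑ i, σ i * (⟪toCLM U (EuclideanSpace.single i 1),
      toCLM G (toCLM V (EuclideanSpace.single i 1))⟫ + c) = 0 := by
    simp only [mul_add, Finset.sum_add_distrib, h, ← Finset.sum_mul]
    ring
  have := (Finset.sum_eq_zero_iff_of_nonneg hle).mp hsum i (Finset.mem_univ i)
  linarith [(mul_eq_zero.mp this).resolve_left (hσ i).ne']

theorem forall_add_frobeniusInner_le_iff {c : ℝ} (hc : 0 ≤ c) {Z G : Matrix (Fin m) (Fin n) ℝ}
    {U : Matrix (Fin m) (Fin r) ℝ} {V : Matrix (Fin n) (Fin r) ℝ} {σ : Fin r → ℝ}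
    (hU : Uᵀ * U = 1) (hV : Vᵀ * V = 1) (hσ : ∀ i, 0 < σ i) (hZ : Z = U * diagonal σ * Vᵀ) :
    (∀ A, c * nuclearNorm Z + frobeniusInner G Z ≤ c * nuclearNorm A + frobeniusInner G A) ↔
      G * V = -c • U ∧ Gᵀ * U = -c • V ∧ matOpNorm G ≤ c := by
  subst hZ
  have hnuc := nuclearNorm_mul_diagonal_mul_transpose hU hV fun i => (hσ i).le
  constructor
  · intro hmin
    rw [hnuc] at hmin
    have hZ : frobeniusInner G (U * diagonal σ * Vᵀ) = -(c * ∑ i, σ i) := by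
      -- compare with the competitors `0` and `2 • Z`
      have h₀ := hmin 0
      have h₂ := hmin ((2 : ℝ) • (U * diagonal σ * Vᵀ))
      have h₂' := mul_le_mul_of_nonneg_left
        (nuclearNorm_smul_le zero_le_two (U * diagonal σ * Vᵀ)) hc
      rw [nuclearNorm_zero, frobeniusInner_zero_right] at h₀
      rw [frobeniusInner_smul_right] at h₂
      rw [hnuc] at h₂'
      linarith
    have hG : matOpNorm G ≤ c :=
      matOpNorm_le_of_forall_neg_frobeniusInner_le hc fun A => by linarith [hmin A]
    have hcol := inner_toCLM_single_eq_neg_of_frobeniusInner_eq hU hV hσ hG hZ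
    refine ⟨mul_eq_neg_smul_of_inner_eq_neg hU hV hG hcol,
      mul_eq_neg_smul_of_inner_eq_neg hV hU ((matOpNorm_transpose G).le.trans hG) fun i => ?_, hG⟩
    rw [inner_toCLM_transpose_right, real_inner_comm, hcol]
  · rintro ⟨hGV, -, hG⟩ A
    have hcol : ∀ i, toCLM G (toCLM V (EuclideanSpace.single i 1)) =
        -c • toCLM U (EuclideanSpace.single i 1) := fun i => by
      rw [← ContinuousLinearMap.comp_apply, ← toCLM_mul, hGV, toCLM_smul, _root_.smul_apply]
    have hZ :
        c * nuclearNorm (U * diagonal σ * Vᵀ) + frobeniusInner G (U * diagonal σ * Vᵀ) = 0 := by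
      simp only [frobeniusInner_mul_diagonal_mul_transpose, hnuc, hcol, real_inner_smul_right,
        real_inner_self_eq_norm_sq, norm_toCLM_single_of_transpose_mul_self hU]
      rw [Finset.mul_sum, ← Finset.sum_add_distrib]
      exact Finset.sum_eq_zero fun i _ => by ring
    have hA := frobeniusInner_le_matOpNorm_mul_nuclearNorm (-G) A
    rw [frobeniusInner_neg_left, matOpNorm_neg] at hA
    nlinarith [nuclearNorm_nonneg A]

lemma _root_.LinearMap.apply_eq_frobeniusInner (φ : Matrix (Fin m) (Fin n) ℝ →ₗ[ℝ] ℝ)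
    {G : Matrix (Fin m) (Fin n) ℝ} (hG : ∀ i j, G i j = φ (single i j 1))
    (D : Matrix (Fin m) (Fin n) ℝ) : φ D = frobeniusInner G D := by
  conv_lhs => rw [matrix_eq_sum_single D]
  simp only [map_sum, frobeniusInner, trace, diag, mul_apply, transpose_apply]
  rw [Finset.sum_comm]
  refine Finset.sum_congr rfl fun i _ => Finset.sum_congr rfl fun j _ => ?_
  rw [hG, mul_comm, ← smul_eq_mul, ← map_smul, smul_single, smul_eq_mul, mul_one]

end Matrix

section Objective

variable {K N : ℕ} {g : Matrix (Fin K) (Fin N) ℝ → ℝ} {lb : ℝ} {Z G : Matrix (Fin K) (Fin N) ℝ}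
  {b : Fin K → ℝ}

noncomputable def ftildeSmooth (g : Matrix (Fin K) (Fin N) ℝ → ℝ) (lb : ℝ)
    (p : Matrix (Fin K) (Fin N) ℝ × (Fin K → ℝ)) : ℝ :=
  g (p.1 + replicateCol (Fin N) p.2) + lb / 2 * ∑ i, p.2 i ^ 2

lemma ftilde_eq_ftildeSmooth_add (lW lH : ℝ) (Z : Matrix (Fin K) (Fin N) ℝ) (b : Fin K → ℝ) :
    ftilde g lW lH lb Z b = ftildeSmooth g lb (Z, b) + √(lW * lH) * nuclearNorm Z :=
  add_right_comm _ _ _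

lemma hasLineDerivAt_ftildeSmooth (hgdiff : Differentiable ℝ g)
    (hdg : ∀ D, fderiv ℝ g (Z + replicateCol (Fin N) b) D = frobeniusInner G D)
    (D : Matrix (Fin K) (Fin N) ℝ) (e : Fin K → ℝ) :
    HasLineDerivAt ℝ (ftildeSmooth g lb)
      (frobeniusInner G D + ∑ k, ((∑ j, G k j) + lb * b k) * e k) (Z, b) (D, e) := by
  have hg := (hgdiff (Z + replicateCol (Fin N) b)).hasFDerivAt.hasLineDerivAt
    (D + replicateCol (Fin N) e)
  have hq : HasDerivAt (fun t : ℝ => lb / 2 * ∑ i, (b i + t * e i) ^ 2) (lb * ∑ i, b i * e i) 0 :=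
    ((HasDerivAt.fun_sum (u := Finset.univ) fun i _ =>
      (((hasDerivAt_id (0 : ℝ)).mul_const (e i)).const_add (b i)).pow 2).const_mul
        (lb / 2)).congr_deriv (by
      simp only [Nat.cast_ofNat, id_eq, zero_mul, add_zero, Nat.add_one_sub_one, pow_one, one_mul,
        Finset.mul_sum]
      exact Finset.sum_congr rfl fun i _ => by ring)
  have hpath : (fun t : ℝ => ftildeSmooth g lb ((Z, b) + t • (D, e))) = fun t =>
      g (Z + replicateCol (Fin N) b + t • (D + replicateCol (Fin N) e)) +
        lb / 2 * ∑ i, (b i + t * e i) ^ 2 := by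
    funext t
    simp only [ftildeSmooth, Prod.fst_add, Prod.snd_add, Prod.smul_fst, Prod.smul_snd]
    congr 2
    ext i j
    simp only [Matrix.add_apply, Matrix.smul_apply, replicateCol_apply, Pi.add_apply,
      Pi.smul_apply, smul_eq_mul]
    ring
  unfold HasLineDerivAt at hg ⊢
  rw [hpath]
  refine (hg.add hq).congr_deriv ((congrArg (· + lb * ∑ i, b i * e i) (hdg _)).trans ?_)
  simp only [frobeniusInner_add_right, frobeniusInner_replicateCol, add_mul,
    Finset.sum_add_distrib, Finset.mul_sum, mul_assoc, add_assoc]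

lemma ftildeSmooth_add_le (hgconv : ConvexOn ℝ Set.univ g) (hgdiff : Differentiable ℝ g)
    (hlb : 0 ≤ lb) (hdg : ∀ D, fderiv ℝ g (Z + replicateCol (Fin N) b) D = frobeniusInner G D)
    (Z' : Matrix (Fin K) (Fin N) ℝ) (b' : Fin K → ℝ) :
    ftildeSmooth g lb (Z, b) +
        (frobeniusInner G (Z' - Z) + ∑ k, ((∑ j, G k j) + lb * b k) * (b' k - b k)) ≤
      ftildeSmooth g lb (Z', b') := by
  set X := Z + replicateCol (Fin N) b
  have hdir : Z' + replicateCol (Fin N) b' - X = (Z' - Z) + replicateCol (Fin N) (b' - b) := by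
    ext i j
    simp only [X, Matrix.sub_apply, Matrix.add_apply, replicateCol_apply, Pi.sub_apply]
    ring
  have hg : g X + frobeniusInner G (Z' + replicateCol (Fin N) b' - X) ≤
      g (Z' + replicateCol (Fin N) b') := by
    convert hgconv.add_le_of_hasLineDerivAt
      ((hgdiff X).hasFDerivAt.hasLineDerivAt (Z' + replicateCol (Fin N) b' - X)) using 2
    exact (hdg _).symm
  have hq : lb / 2 * ∑ i, b i ^ 2 + lb * ∑ k, b k * (b' k - b k) + lb / 2 * ∑ k, (b' k - b k) ^ 2
      = lb / 2 * ∑ i, b' i ^ 2 := by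
    simp only [Finset.mul_sum, ← Finset.sum_add_distrib]
    exact Finset.sum_congr rfl fun k _ => by ring
  have hsplit : ∑ k, ((∑ j, G k j) + lb * b k) * (b' k - b k) =
      ∑ k, (∑ j, G k j) * (b' - b) k + lb * ∑ k, b k * (b' k - b k) := by
    simp only [add_mul, Finset.sum_add_distrib, Finset.mul_sum, Pi.sub_apply, mul_assoc]
  rw [hdir, frobeniusInner_add_right, frobeniusInner_replicateCol] at hg
  have : 0 ≤ lb / 2 * ∑ k, (b' k - b k) ^ 2 := by positivity
  simp only [ftildeSmooth]
  linarith

theorem forall_ftilde_le_iff (hgconv : ConvexOn ℝ Set.univ g) (hgdiff : Differentiable ℝ g)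
    (hlb : 0 ≤ lb) (lW lH : ℝ)
    (hdg : ∀ D, fderiv ℝ g (Z + replicateCol (Fin N) b) D = frobeniusInner G D) :
    (∀ (Z' : Matrix (Fin K) (Fin N) ℝ) (b' : Fin K → ℝ),
        ftilde g lW lH lb Z b ≤ ftilde g lW lH lb Z' b') ↔
      (∀ A, √(lW * lH) * nuclearNorm Z + frobeniusInner G Z ≤
          √(lW * lH) * nuclearNorm A + frobeniusInner G A) ∧
        ∀ k, (∑ j, G k j) + lb * b k = 0 := by
  simp only [ftilde_eq_ftildeSmooth_add]
  constructor
  · intro hmin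
    have hfo : ∀ Z' (b' : Fin K → ℝ), √(lW * lH) * nuclearNorm Z ≤ √(lW * lH) * nuclearNorm Z' +
        (frobeniusInner G (Z' - Z) + ∑ k, ((∑ j, G k j) + lb * b k) * (b' k - b k)) :=
      fun Z' b' => ConvexOn.le_add_of_forall_add_le_add (y := (Z', b'))
        (by simpa using ((convexOn_nuclearNorm.smul (Real.sqrt_nonneg (lW * lH))).comp_linearMap
          (LinearMap.fst ℝ _ (Fin K → ℝ))))
        (fun p => hmin p.1 p.2) (hasLineDerivAt_ftildeSmooth hgdiff hdg (Z' - Z) (b' - b))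
    refine ⟨fun A => ?_, fun k => ?_⟩
    · have := hfo A b
      simp only [sub_self, mul_zero, Finset.sum_const_zero, add_zero,
        frobeniusInner_sub_right] at this
      linarith
    · set r := fun k => (∑ j, G k j) + lb * b k
      have := hfo Z (b - r)
      simp only [sub_self, frobeniusInner_zero_right, zero_add, Pi.sub_apply, sub_sub_cancel_left,
        mul_neg, Finset.sum_neg_distrib] at this
      have hsq : ∑ k, r k ^ 2 = 0 :=
        le_antisymm (by simpa [sq] using this) (Finset.sum_nonneg fun _ _ => sq_nonneg _)
      exact pow_eq_zero_iff two_ne_zero |>.mp <|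
        (Finset.sum_eq_zero_iff_of_nonneg fun _ _ => sq_nonneg _).mp hsq k (Finset.mem_univ k)
  · rintro ⟨hA, hr⟩ Z' b'
    have := ftildeSmooth_add_le hgconv hgdiff hlb hdg Z' b'
    simp only [hr, zero_mul, Finset.sum_const_zero, add_zero, frobeniusInner_sub_right] at this
    linarith [hA Z']

end Objective

theorem stmt19_general {K N r : ℕ} (g : Matrix (Fin K) (Fin N) ℝ → ℝ)
    (hgconv : ConvexOn ℝ Set.univ g) (hgdiff : Differentiable ℝ g)
    (lW lH lb : ℝ) (hlb : 0 < lb)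
    (Z : Matrix (Fin K) (Fin N) ℝ) (b : Fin K → ℝ)
    (U : Matrix (Fin K) (Fin r) ℝ) (V : Matrix (Fin N) (Fin r) ℝ) (σ : Fin r → ℝ)
    (hU : Uᵀ * U = 1) (hV : Vᵀ * V = 1) (hσ : ∀ i, 0 < σ i)
    (hZ : Z = U * Matrix.diagonal σ * Vᵀ)
    (G : Matrix (Fin K) (Fin N) ℝ)
    (hG : ∀ i j, G i j =
      fderiv ℝ g (Z + Matrix.of fun i' _ => b i') (Matrix.single i j 1)) :
    (∀ (Z' : Matrix (Fin K) (Fin N) ℝ) (b' : Fin K → ℝ),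
        ftilde g lW lH lb Z b ≤ ftilde g lW lH lb Z' b') ↔
      (G * V = (-Real.sqrt (lW * lH)) • U ∧
       Gᵀ * U = (-Real.sqrt (lW * lH)) • V ∧
       matOpNorm G ≤ Real.sqrt (lW * lH) ∧
       ∀ k, (∑ j, G k j) + lb * b k = 0) := by
  have hdg := (fderiv ℝ g (Z + replicateCol (Fin N) b)).toLinearMap.apply_eq_frobeniusInner hG
  rw [forall_ftilde_le_iff hgconv hgdiff hlb.le lW lH hdg,
    forall_add_frobeniusInner_le_iff (Real.sqrt_nonneg _) hU hV hσ hZ]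
  simp only [and_assoc]

/-- Optimality condition for the convex program: with `g` convex differentiable,
`G = ∇g(Z + b1ᵀ)`, and `Z = U Σ Vᵀ` a compact SVD of `Z`, the pair `(Z, b)` is a global
minimizer of `f̃` iff `G V = −√(λ_W λ_H) U`, `Gᵀ U = −√(λ_W λ_H) V`,
`‖G‖ ≤ √(λ_W λ_H)` (operator norm), and `∑ᵢ Gᵢ + λ_b b = 0` (column sums). -/
theorem stmt19 {K N r : ℕ} (g : Matrix (Fin K) (Fin N) ℝ → ℝ)
    (hgconv : ConvexOn ℝ Set.univ g) (hgdiff : Differentiable ℝ g)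
    (lW lH lb : ℝ) (hlW : 0 < lW) (hlH : 0 < lH) (hlb : 0 < lb)
    (Z : Matrix (Fin K) (Fin N) ℝ) (b : Fin K → ℝ)
    (U : Matrix (Fin K) (Fin r) ℝ) (V : Matrix (Fin N) (Fin r) ℝ) (σ : Fin r → ℝ)
    (hU : Uᵀ * U = 1) (hV : Vᵀ * V = 1) (hσ : ∀ i, 0 < σ i)
    (hZ : Z = U * Matrix.diagonal σ * Vᵀ)
    (G : Matrix (Fin K) (Fin N) ℝ)
    (hG : ∀ i j, G i j =
      fderiv ℝ g (Z + Matrix.of fun i' _ => b i') (Matrix.single i j 1)) :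
    (∀ (Z' : Matrix (Fin K) (Fin N) ℝ) (b' : Fin K → ℝ),
        ftilde g lW lH lb Z b ≤ ftilde g lW lH lb Z' b') ↔
      (G * V = (-Real.sqrt (lW * lH)) • U ∧
       Gᵀ * U = (-Real.sqrt (lW * lH)) • V ∧
       matOpNorm G ≤ Real.sqrt (lW * lH) ∧
       ∀ k, (∑ j, G k j) + lb * b k = 0) :=
  stmt19_general g hgconv hgdiff lW lH lb hlb Z b U V σ hU hV hσ hZ G hG
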